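/- Let π ∈ S_{m,n} be decreasing, i.e. π(1) > π(2) > … > π(m). Then for every hybridization β ∈ {⊤,⊥}^m, G_π^β = ∏_{i=1}^m [ (A+B) · ∏_{j=1}^{π(i)−1} (A + x_i − y_j) · ∏_{j=π(i)+1}^{n} (B − x_i + y_j) ]. -/

import Mathlib

/-! # Hybrid generic pipe dreams -/

/-- Tiles: sets of pipe segments in a unit cell. `wn` = {W–N}, `se` = {S–E},
`wnse` = {W–N, S–E}, `en` = {E–N}, `sw` = {S–W}, `ensw` = {E–N, S–W}, `we` = {W–E},
`sn` = {S–N}, `wesn` = {W–E, S–N} (crossing), `blank` = ∅. -/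
inductive Tile
  | blank | wn | se | wnse | en | sw | ensw | we | sn | wesn
  deriving DecidableEq

instance : Fintype Tile where
  elems := {.blank, .wn, .se, .wnse, .en, .sw, .ensw, .we, .sn, .wesn}
  complete := by intro x; cases x <;> simp

namespace Tile

/-- The West edge is occupied. -/
def occW : Tile → Bool
  | wn | wnse | we | wesn | sw | ensw => true
  | _ => false

/-- The East edge is occupied. -/
def occE : Tile → Bool
  | se | wnse | we | wesn | en | ensw => true
  | _ => false

/-- The North edge is occupied. -/
def occN : Tile → Bool
  | wn | wnse | sn | wesn | en | ensw => true
  | _ => false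

/-- The South edge is occupied. -/
def occS : Tile → Bool
  | se | wnse | sn | wesn | sw | ensw => true
  | _ => false

/-- Elbow tiles. -/
def isElbow : Tile → Bool
  | wn | se | wnse | en | sw | ensw => true
  | _ => false

/-- Straight tiles. -/
def isStraight : Tile → Bool
  | we | sn | wesn => true
  | _ => false

/-- Left-right mirror image of a tile (exchanging the roles of the E and W edges). -/
def mirror : Tile → Tile
  | wn => en | en => wn | se => sw | sw => se | wnse => ensw | ensw => wnse
  | t => t

end Tile

/-- The allowed tiles in a row of type `⊤` (`true`) resp. `⊥` (`false`). -/
def allowedIn (rt : Bool) (t : Tile) : Prop :=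
  if rt then
    t = .blank ∨ t = .wn ∨ t = .se ∨ t = .wnse ∨ t = .we ∨ t = .sn ∨ t = .wesn
  else
    t = .blank ∨ t = .en ∨ t = .sw ∨ t = .ensw ∨ t = .we ∨ t = .sn ∨ t = .wesn

section Routing

variable {ι : Type*}

/-- In a `⊤`-row tile, the pipe exiting East given the pipes entering from West and South. -/
def eOutT : Tile → Option ι → Option ι → Option ι
  | .se, _, s => s
  | .wnse, _, s => s
  | .we, w, _ => w
  | .wesn, w, _ => w
  | _, _, _ => none

/-- In a `⊤`-row tile, the pipe exiting North given the pipes entering from West and South. -/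
def nOutT : Tile → Option ι → Option ι → Option ι
  | .wn, w, _ => w
  | .wnse, w, _ => w
  | .sn, _, s => s
  | .wesn, _, s => s
  | _, _, _ => none

/-- Tracing a `⊤`-type row left to right: the pipe on the vertical edge left of column `j`,
where `bot j` is the pipe entering column `j` from the South and `enter` enters from the West. -/
def hTrace (t : ℕ → Tile) (bot : ℕ → Option ι) (enter : Option ι) : ℕ → Option ι
  | 0 => enter
  | j + 1 => eOutT (t j) (hTrace t bot enter j) (bot j)

/-- The pipe exiting North from column `j` of a `⊤`-type row. -/
def topOutT (t : ℕ → Tile) (bot : ℕ → Option ι) (enter : Option ι) (j : ℕ) : Option ι :=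
  nOutT (t j) (hTrace t bot enter j) (bot j)

/-- The pipe exiting North from column `j` of a `⊥`-type row with `n` columns (the pipe
`enter` enters from the East); computed by mirroring. -/
def topOutB (n : ℕ) (t : ℕ → Tile) (bot : ℕ → Option ι) (enter : Option ι) (j : ℕ) :
    Option ι :=
  topOutT (fun j' => (t (n - 1 - j')).mirror) (fun j' => bot (n - 1 - j')) enter (n - 1 - j)

/-- The pipe exiting North from column `j` of a row of type `rt`. -/
def rowTop (rt : Bool) (n : ℕ) (t : ℕ → Tile) (bot : ℕ → Option ι) (enter : Option ι)
    (j : ℕ) : Option ι :=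
  if rt then topOutT t bot enter j else topOutB n t bot enter j

end Routing

/-- The row-`i` tiles of a filling, as a `ℕ`-indexed family. -/
def tilesOf {m n : ℕ} (f : Fin m → Fin n → Tile) (i : Fin m) : ℕ → Tile :=
  fun j => if h : j < n then f i ⟨j, h⟩ else Tile.blank

/-- The pipes (labeled by the row in which they enter) crossing the horizontal line `m - r`
of the grid (so `r = 0` is the South boundary and `r = m` the North boundary). -/
def lineState (m n : ℕ) (β : Fin m → Bool) (f : Fin m → Fin n → Tile) :
    ℕ → ℕ → Option (Fin m)
  | 0, _ => none
  | r + 1, j =>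
    if h : r < m then
      rowTop (β ⟨m - 1 - r, by omega⟩) n (tilesOf f ⟨m - 1 - r, by omega⟩)
        (fun j' => lineState m n β f r j') (some ⟨m - 1 - r, by omega⟩) j
    else lineState m n β f r j

/-- The pipe exiting through the North boundary at column `j`. -/
def northExit (m n : ℕ) (β : Fin m → Bool) (f : Fin m → Fin n → Tile) (j : Fin n) :
    Option (Fin m) :=
  lineState m n β f m (j : ℕ)

private theorem filter_card_lt {m : ℕ} (i : Fin m) (p : Fin m → Prop) [DecidablePred p]
    (h : ∀ a, p a → a ≠ i) : (Finset.univ.filter p).card < m := by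
  have hsub : Finset.univ.filter p ⊆ Finset.univ.erase i := fun a ha =>
    Finset.mem_erase.mpr ⟨h a (Finset.mem_filter.mp ha).2, Finset.mem_univ a⟩
  calc (Finset.univ.filter p).card ≤ (Finset.univ.erase i).card := Finset.card_le_card hsub
    _ < Finset.univ.card := Finset.card_erase_lt_of_mem (Finset.mem_univ i)
    _ = m := by simp

/-- The number `φ_β(i)` (0-indexed) of the pipe entering in row `i`: pipes are numbered
counterclockwise starting from the NW corner. -/
def pipeNo {m : ℕ} (β : Fin m → Bool) (i : Fin m) : Fin m :=
  if hβ : β i then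
    ⟨(Finset.univ.filter (fun a => a < i ∧ β a)).card,
      filter_card_lt i _ (fun a ha => ne_of_lt ha.1)⟩
  else
    ⟨(Finset.univ.filter (fun a : Fin m => β a)).card +
        (Finset.univ.filter (fun a : Fin m => i < a ∧ ¬(β a : Prop))).card, by
      have hd : Disjoint (Finset.univ.filter (fun a : Fin m => (β a : Prop)))
          (Finset.univ.filter (fun a : Fin m => i < a ∧ ¬(β a : Prop))) := by
        rw [Finset.disjoint_left]
        intro a ha hb
        exact (Finset.mem_filter.mp hb).2.2 (Finset.mem_filter.mp ha).2
      rw [← Finset.card_union_of_disjoint hd, ← Finset.filter_or]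
      refine filter_card_lt i _ ?_
      rintro a (h1 | ⟨h2, _⟩)
      · rintro rfl; exact hβ h1
      · exact ne_of_gt h2⟩

/-- A hybrid generic pipe dream of type `β`: allowed tiles, matching of occupied edges,
unoccupied South boundary, and entering conditions on the West/East boundaries. -/
def IsHGPD (m n : ℕ) (β : Fin m → Bool) (f : Fin m → Fin n → Tile) : Prop :=
  (∀ i j, allowedIn (β i) (f i j)) ∧
  (∀ (i : Fin m) (j : Fin n) (h : (j : ℕ) + 1 < n),
    (f i j).occE = (f i ⟨j + 1, h⟩).occW) ∧
  (∀ (i : Fin m) (h : (i : ℕ) + 1 < m) (j : Fin n),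
    (f i j).occS = (f ⟨i + 1, h⟩ j).occN) ∧
  (∀ (i : Fin m) (j : Fin n), (i : ℕ) + 1 = m → (f i j).occS = false) ∧
  (∀ (i : Fin m) (j : Fin n), (j : ℕ) = 0 → (f i j).occW = β i) ∧
  (∀ (i : Fin m) (j : Fin n), (j : ℕ) + 1 = n → (f i j).occE = !β i)

/-- The pipe dream has connectivity `π`: the pipe numbered `k` exits the North side in
column `π(k)`; equivalently the pipe entering in row `i` exits in column `π(φ_β(i))`. -/
def Connectivity (m n : ℕ) (β : Fin m → Bool) (f : Fin m → Fin n → Tile)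
    (π : Fin m ↪ Fin n) : Prop :=
  ∀ i : Fin m, northExit m n β f (π (pipeNo β i)) = some i

/-! ## Weights -/

/-- Variable set for `ℤ[x_1,…,x_m,y_1,…,y_n,A,B]`: `none` is `B`, `some (inl i)` is `x_i`,
`some (inr (inl j))` is `y_j`, `some (inr (inr ()))` is `A`. -/
abbrev PDVar (m n : ℕ) := Option (Fin m ⊕ (Fin n ⊕ Unit))

noncomputable def xP (m n : ℕ) (i : Fin m) : MvPolynomial (PDVar m n) ℤ :=
  MvPolynomial.X (some (Sum.inl i))

noncomputable def yP (m n : ℕ) (j : Fin n) : MvPolynomial (PDVar m n) ℤ :=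
  MvPolynomial.X (some (Sum.inr (Sum.inl j)))

noncomputable def AP (m n : ℕ) : MvPolynomial (PDVar m n) ℤ :=
  MvPolynomial.X (some (Sum.inr (Sum.inr ())))

noncomputable def BP (m n : ℕ) : MvPolynomial (PDVar m n) ℤ :=
  MvPolynomial.X none

/-- The weight of the tile in cell `(i,j)` of a row of type `rt` whose entering pipe is
numbered `k`. -/
noncomputable def tileWt (m n : ℕ) (rt : Bool) (t : Tile) (k : Fin m) (j : Fin n) :
    MvPolynomial (PDVar m n) ℤ :=
  if t.isElbow then AP m n + BP m n
  else if t.isStraight then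
    (if rt then AP m n + xP m n k - yP m n j else BP m n - xP m n k + yP m n j)
  else
    (if rt then BP m n - xP m n k + yP m n j else AP m n + xP m n k - yP m n j)

/-- The weight of a pipe dream: the product of the weights of its tiles. -/
noncomputable def pdWeight (m n : ℕ) (β : Fin m → Bool) (f : Fin m → Fin n → Tile) :
    MvPolynomial (PDVar m n) ℤ :=
  ∏ i : Fin m, ∏ j : Fin n, tileWt m n (β i) (f i j) (pipeNo β i) j

open Classical in
/-- The generic pipe dream polynomial `G_π^β`: the sum of the weights of all hybrid generic
pipe dreams of type `β` with connectivity `π`. -/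
noncomputable def GPD (m n : ℕ) (β : Fin m → Bool) (π : Fin m ↪ Fin n) :
    MvPolynomial (PDVar m n) ℤ :=
  ∑ f ∈ Finset.univ.filter
      (fun f : Fin m → Fin n → Tile => IsHGPD m n β f ∧ Connectivity m n β f π),
    pdWeight m n β f

/-!
Read every row in the direction in which its own pipe travels, mirroring the `⊥` rows: then every
row is a `⊤` row, and since `π` is decreasing, in each row the pipes coming from the rows below
exit before the row's own pipe. Because every row adds exactly one pipe, the North boundary
carries exactly the `m` exit columns. Going down row by row, a `⊤` row whose outgoing pipes at
the top are known, with its own pipe leaving rightmost, is forced: its own pipe runs straight to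
its exit column and turns North there, lower pipes cross it vertically, and the cells beyond the
exit column are blank. This pipe dream is indeed an HGPD with connectivity `π`, so it is the only
one; each of its rows has one elbow, straight tiles on one side of the exit column and blanks on
the other, which gives the product.
-/

namespace Tile

theorem mirror_mirror (t : Tile) : t.mirror.mirror = t := by cases t <;> rfl

theorem occW_mirror (t : Tile) : t.mirror.occW = t.occE := by cases t <;> rfl

theorem occE_mirror (t : Tile) : t.mirror.occE = t.occW := by cases t <;> rfl

theorem allowedIn_true_mirror {t : Tile} : allowedIn true t.mirror ↔ allowedIn false t := by
  cases t <;> simp [allowedIn, mirror]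

/-- A tile read in the direction in which the pipe of its row, of type `rt`, travels: mirroring
turns a `⊥` row into a `⊤` row. -/
def orient (rt : Bool) (t : Tile) : Tile := if rt then t else t.mirror

@[simp] theorem orient_orient (rt : Bool) (t : Tile) : orient rt (orient rt t) = t := by
  cases rt
  · exact mirror_mirror t
  · rfl

@[simp] theorem occN_orient (rt : Bool) (t : Tile) : (orient rt t).occN = t.occN := by
  cases rt <;> cases t <;> rfl

@[simp] theorem occS_orient (rt : Bool) (t : Tile) : (orient rt t).occS = t.occS := by
  cases rt <;> cases t <;> rfl

theorem eq_blank_of_occN_of_occE {t : Tile} (ht : allowedIn true t) (hN : t.occN = false)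
    (hE : t.occE = false) : t = blank := by
  cases t <;> simp_all [allowedIn, occN, occE]

end Tile

def rowCol (rt : Bool) (n j : ℕ) : ℕ := if rt then j else n - 1 - j

theorem rowCol_lt {rt : Bool} {n j : ℕ} (hj : j < n) : rowCol rt n j < n := by
  cases rt <;> simp [rowCol] <;> omega

theorem rowCol_rowCol {rt : Bool} {n j : ℕ} (hj : j < n) : rowCol rt n (rowCol rt n j) = j := by
  cases rt <;> simp [rowCol]
  omega

theorem rowCol_inj {rt : Bool} {n j j' : ℕ} (hj : j < n) (hj' : j' < n) :
    rowCol rt n j = rowCol rt n j' ↔ j = j' := by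
  cases rt <;> simp [rowCol]
  omega

theorem sum_range_rowCol {M : Type*} [AddCommMonoid M] (rt : Bool) (n : ℕ) (g : ℕ → M) :
    ∑ c ∈ Finset.range n, g (rowCol rt n c) = ∑ j ∈ Finset.range n, g j := by
  cases rt
  · exact Finset.sum_range_reflect g n
  · rfl

def orientRow (rt : Bool) (n : ℕ) (t : ℕ → Tile) (c : ℕ) : Tile :=
  Tile.orient rt (t (rowCol rt n c))

theorem rowTop_eq_topOutT {ι : Type*} (rt : Bool) (n : ℕ) (t : ℕ → Tile) (bot : ℕ → Option ι)
    (e : Option ι) (j : ℕ) :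
    rowTop rt n t bot e j =
      topOutT (orientRow rt n t) (fun c => bot (rowCol rt n c)) e (rowCol rt n j) := by
  cases rt <;> rfl

/-- The conditions `IsHGPD` imposes on a single row of type `rt`. -/
structure IsRow (rt : Bool) (n : ℕ) (t : ℕ → Tile) : Prop where
  pos : 0 < n
  allowed : ∀ c < n, allowedIn rt (t c)
  occW_zero : (t 0).occW = rt
  occE_last : (t (n - 1)).occE = !rt
  occE_eq_occW : ∀ c, c + 1 < n → (t c).occE = (t (c + 1)).occW

theorem IsRow.congr {rt : Bool} {n : ℕ} {t t' : ℕ → Tile} (hrow : IsRow rt n t)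
    (h : ∀ c < n, t c = t' c) : IsRow rt n t' := by
  obtain ⟨hn, hA, hW, hE, hM⟩ := hrow
  refine ⟨hn, fun c hc => h c hc ▸ hA c hc, h 0 hn ▸ hW, h (n - 1) (by omega) ▸ hE,
    fun c hc => ?_⟩
  rw [← h c (by omega), ← h (c + 1) hc]
  exact hM c hc

theorem isRow_orientRow_iff {rt : Bool} {n : ℕ} {t : ℕ → Tile} :
    IsRow true n (orientRow rt n t) ↔ IsRow rt n t := by
  cases rt
  · rw [show orientRow false n t = fun c => (t (n - 1 - c)).mirror from rfl]
    constructor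
    · rintro ⟨hn, hA, hW, hE, hM⟩
      refine ⟨hn, fun c hc => ?_, ?_, ?_, fun c hc => ?_⟩
      · simpa [Tile.allowedIn_true_mirror, show n - 1 - (n - 1 - c) = c by omega]
          using hA (n - 1 - c) (by omega)
      · simpa [Tile.occE_mirror] using hE
      · simpa [Tile.occW_mirror] using hW
      · have := hM (n - 1 - (c + 1)) (by omega)
        rw [show n - 1 - (n - 1 - (c + 1)) = c + 1 by omega,
          show n - 1 - (n - 1 - (c + 1) + 1) = c by omega, Tile.occE_mirror,
          Tile.occW_mirror] at this
        exact this.symm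
    · rintro ⟨hn, hA, hW, hE, hM⟩
      refine ⟨hn, fun c hc => ?_, ?_, ?_, fun c hc => ?_⟩
      · exact Tile.allowedIn_true_mirror.mpr (hA _ (by omega))
      · simpa [Tile.occW_mirror] using hE
      · simpa [Tile.occE_mirror] using hW
      · rw [Tile.occE_mirror, Tile.occW_mirror, show n - 1 - c = n - 1 - (c + 1) + 1 by omega]
        exact (hM _ (by omega)).symm
  · rfl

section TopRow

variable {ι : Type*}

theorem eOutT_mem (t : Tile) (w s : Option ι) :
    eOutT t w s = none ∨ eOutT t w s = w ∨ eOutT t w s = s := by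
  cases t <;> simp [eOutT]

theorem nOutT_mem (t : Tile) (w s : Option ι) :
    nOutT t w s = none ∨ nOutT t w s = w ∨ nOutT t w s = s := by
  cases t <;> simp [nOutT]

section Occupancy

variable {t : Tile} {w s : Option ι}

theorem isSome_eOutT (ht : allowedIn true t) (hw : w.isSome = t.occW) (hs : s.isSome = t.occS) :
    (eOutT t w s).isSome = t.occE := by
  cases t <;> simp_all [allowedIn, eOutT, Tile.occW, Tile.occE, Tile.occS]

theorem isSome_nOutT (ht : allowedIn true t) (hw : w.isSome = t.occW) (hs : s.isSome = t.occS) :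
    (nOutT t w s).isSome = t.occN := by
  cases t <;> simp_all [allowedIn, nOutT, Tile.occW, Tile.occN, Tile.occS]

theorem isSome_nOutT_add_isSome_eOutT (ht : allowedIn true t) (hw : w.isSome = t.occW)
    (hs : s.isSome = t.occS) :
    (nOutT t w s).isSome.toNat + (eOutT t w s).isSome.toNat = s.isSome.toNat + w.isSome.toNat := by
  rw [isSome_nOutT ht hw hs, isSome_eOutT ht hw hs, hw, hs]
  cases t <;> simp_all [allowedIn] <;> rfl

end Occupancy

theorem eq_wn_of_nOutT_eq_some {t : Tile} {w s : Option ι} {e : ι} (hE : t.occE = false)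
    (h : nOutT t w s = some e) (hs : s ≠ some e) : t = .wn ∧ w = some e := by
  cases t <;> simp_all [nOutT, Tile.occE]

theorem eq_we_or_wesn_of_eOutT_eq_some {t : Tile} {w s : Option ι} {e : ι}
    (h : eOutT t w s = some e) (hs : s ≠ some e) : (t = .we ∨ t = .wesn) ∧ w = some e := by
  cases t <;> simp_all [eOutT]

variable {t : ℕ → Tile} {bot : ℕ → Option ι} {e p : ι}

theorem hTrace_eq_some {c : ℕ} (h : hTrace t bot (some e) c = some p) :
    p = e ∨ ∃ c', bot c' = some p := by
  induction c with
  | zero => exact .inl (Option.some_inj.mp h).symm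
  | succ c ih =>
    rw [hTrace] at h
    rcases eOutT_mem (t c) (hTrace t bot (some e) c) (bot c) with h' | h' | h' <;> rw [h'] at h
    · simp at h
    · exact ih h
    · exact .inr ⟨c, h⟩

theorem topOutT_eq_some {c : ℕ} (h : topOutT t bot (some e) c = some p) :
    p = e ∨ ∃ c', bot c' = some p := by
  rw [topOutT] at h
  rcases nOutT_mem (t c) (hTrace t bot (some e) c) (bot c) with h' | h' | h' <;> rw [h'] at h
  · simp at h
  · exact hTrace_eq_some h
  · exact .inr ⟨c, h⟩

/-- The `⊤` row whose own pipe runs from the West boundary to column `q` and turns North there,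
crossed by vertical pipes in the columns where `cross` holds. -/
def canonTopRow (q : ℕ) (cross : ℕ → Bool) (c : ℕ) : Tile :=
  if c = q then .wn else if cross c then .wesn else if c < q then .we else .blank

theorem canonTopRow_congr {q c : ℕ} {cross cross' : ℕ → Bool} (h : cross c = cross' c) :
    canonTopRow q cross c = canonTopRow q cross' c := by
  simp only [canonTopRow, h]

theorem topOutT_canonTopRow {n q : ℕ}
    (ht : ∀ c < n, t c = canonTopRow q (fun c => (bot c).isSome) c)
    (hbot : ∀ c < n, (bot c).isSome → c < q) :
    ∀ c < n, topOutT t bot (some e) c = if c = q then some e else bot c := by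
  have htrace : ∀ c < n, hTrace t bot (some e) c = if c ≤ q then some e else none := by
    intro c
    induction c with
    | zero => simp [hTrace]
    | succ c ih =>
      intro hc
      have := hbot c (by omega)
      rw [hTrace, ht c (by omega), ih (by omega), canonTopRow]
      split_ifs <;> simp_all [eOutT] <;> omega
  intro c hc
  have := hbot c hc
  rw [topOutT, ht c hc, htrace c hc, canonTopRow]
  split_ifs <;> simp_all [nOutT]

namespace IsRow

variable {n : ℕ} (hrow : IsRow true n t) (hbot : ∀ c < n, (bot c).isSome = (t c).occS)
include hrow hbot

theorem isSome_hTrace : ∀ c < n, (hTrace t bot (some e) c).isSome = (t c).occW := by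
  intro c
  induction c with
  | zero => simp [hTrace, hrow.occW_zero]
  | succ c ih =>
    intro hc
    rw [hTrace, isSome_eOutT (hrow.allowed c (by omega)) (ih (by omega)) (hbot c (by omega)),
      hrow.occE_eq_occW c hc]

theorem isSome_hTrace_succ {c : ℕ} (hc : c < n) :
    (hTrace t bot (some e) (c + 1)).isSome = (t c).occE :=
  isSome_eOutT (hrow.allowed c hc) (hrow.isSome_hTrace hbot c hc) (hbot c hc)

theorem isSome_topOutT {c : ℕ} (hc : c < n) :
    (topOutT t bot (some e) c).isSome = (t c).occN :=
  isSome_nOutT (hrow.allowed c hc) (hrow.isSome_hTrace hbot c hc) (hbot c hc)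

theorem sum_isSome_topOutT :
    ∑ c ∈ Finset.range n, (topOutT t bot (some e) c).isSome.toNat =
      ∑ c ∈ Finset.range n, (bot c).isSome.toNat + 1 := by
  -- no pipe is lost or created inside the first `j` cells of the row, except the row's own
  have flow : ∀ j ≤ n, ∑ c ∈ Finset.range j, (topOutT t bot (some e) c).isSome.toNat +
      (hTrace t bot (some e) j).isSome.toNat = ∑ c ∈ Finset.range j, (bot c).isSome.toNat + 1 := by
    intro j
    induction j with
    | zero => simp [hTrace]
    | succ j ih =>
      intro hj
      have hcell := isSome_nOutT_add_isSome_eOutT (hrow.allowed j hj)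
        (hrow.isSome_hTrace hbot (e := e) j hj) (hbot j hj)
      rw [Finset.sum_range_succ, Finset.sum_range_succ, hTrace, topOutT]
      have := ih (by omega)
      omega
  have hlast : (hTrace t bot (some e) n).isSome.toNat = 0 := by
    obtain ⟨k, rfl⟩ : ∃ k, n = k + 1 := ⟨n - 1, by have := hrow.pos; omega⟩
    rw [hrow.isSome_hTrace_succ hbot (by omega), show k = k + 1 - 1 by omega, hrow.occE_last]
    rfl
  simpa [hlast] using flow n le_rfl

variable {q : ℕ} (htop : ∀ c < n, q < c → topOutT t bot (some e) c = none)
include htop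

theorem occE_eq_false_of_le : ∀ c, q ≤ c → c < n → (t c).occE = false := by
  intro c hqc hc
  induction h : n - 1 - c generalizing c with
  | zero => rw [show c = n - 1 by omega]; exact hrow.occE_last
  | succ d ih =>
    have hblank : t (c + 1) = .blank := Tile.eq_blank_of_occN_of_occE (hrow.allowed _ (by omega))
      (by rw [← hrow.isSome_topOutT hbot (by omega), htop _ (by omega) (by omega)]; rfl)
      (ih (c + 1) (by omega) (by omega) (by omega))
    rw [hrow.occE_eq_occW c (by omega), hblank]
    rfl

theorem eq_blank_of_lt {c : ℕ} (hqc : q < c) (hc : c < n) : t c = .blank :=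
  Tile.eq_blank_of_occN_of_occE (hrow.allowed c hc)
    (by rw [← hrow.isSome_topOutT hbot hc, htop c hc hqc]; rfl)
    (hrow.occE_eq_false_of_le hbot htop c hqc.le hc)

variable (hq : q < n) (htop_q : topOutT t bot (some e) q = some e)
  (hbot_e : ∀ c < n, bot c ≠ some e)
include hq htop_q hbot_e

theorem eq_wn : t q = .wn ∧ hTrace t bot (some e) q = some e :=
  eq_wn_of_nOutT_eq_some (hrow.occE_eq_false_of_le hbot htop q le_rfl hq) htop_q (hbot_e q hq)

theorem hTrace_eq_some_of_le :
    ∀ c ≤ q, hTrace t bot (some e) c = some e ∧ (c < q → t c = .we ∨ t c = .wesn) := by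
  intro c hcq
  induction h : q - c generalizing c with
  | zero => exact ⟨by rw [show c = q by omega]; exact (hrow.eq_wn hbot htop hq htop_q hbot_e).2,
      by omega⟩
  | succ d ih =>
    have hstep := (ih (c + 1) (by omega) (by omega)).1
    rw [hTrace] at hstep
    have := eq_we_or_wesn_of_eOutT_eq_some hstep (hbot_e c (by omega))
    exact ⟨this.2, fun _ => this.1⟩

theorem eq_canonTopRow :
    (∀ c < n, t c = canonTopRow q (fun c => (bot c).isSome) c) ∧
      ∀ c < n, (bot c).isSome → c < q := by
  have hshape : ∀ c < n, (c < q → t c = .we ∨ t c = .wesn) ∧ (c = q → t c = .wn) ∧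
      (q < c → t c = .blank) := fun c hc =>
    ⟨fun h => (hrow.hTrace_eq_some_of_le hbot htop hq htop_q hbot_e c h.le).2 h,
      fun h => h ▸ (hrow.eq_wn hbot htop hq htop_q hbot_e).1,
      (hrow.eq_blank_of_lt hbot htop · hc)⟩
  refine ⟨fun c hc => ?_, fun c hc hs => ?_⟩
  · rcases lt_trichotomy c q with h | rfl | h
    · rcases (hshape c hc).1 h with ht | ht <;>
        simp [canonTopRow, hbot c hc, ht, h, h.ne, Tile.occS]
    · simp [canonTopRow, (hshape c hc).2.1 rfl]
    · simp [canonTopRow, hbot c hc, (hshape c hc).2.2 h, h.ne', h.not_gt, Tile.occS]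
  · rw [hbot c hc] at hs
    by_contra! h
    rcases h.eq_or_lt with h | h
    · simp [(hshape c hc).2.1 h.symm, Tile.occS] at hs
    · simp [(hshape c hc).2.2 h, Tile.occS] at hs

end IsRow

end TopRow

section CanonTopRow

variable {n q : ℕ} {cross : ℕ → Bool}

section Cell

variable {c : ℕ} (h : cross c → c < q)
include h

theorem occW_canonTopRow : (canonTopRow q cross c).occW = decide (c ≤ q) := by
  simp only [canonTopRow]
  split_ifs <;> simp_all [Tile.occW] <;> omega

theorem occE_canonTopRow : (canonTopRow q cross c).occE = decide (c < q) := by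
  simp only [canonTopRow]
  split_ifs <;> simp_all [Tile.occE]

theorem occS_canonTopRow : (canonTopRow q cross c).occS = cross c := by
  simp only [canonTopRow]
  split_ifs <;> simp_all [Tile.occS]

theorem occN_canonTopRow : (canonTopRow q cross c).occN = (decide (c = q) || cross c) := by
  simp only [canonTopRow]
  split_ifs <;> simp_all [Tile.occN]

end Cell

theorem isRow_canonTopRow (hq : q < n) (hcross : ∀ c < n, cross c → c < q) :
    IsRow true n (canonTopRow q cross) := by
  refine ⟨by omega, fun c hc => ?_, ?_, ?_, fun c hc => ?_⟩
  · simp only [canonTopRow]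
    split_ifs <;> simp [allowedIn]
  · simp [occW_canonTopRow (hcross 0 (by omega))]
  · simp [occE_canonTopRow (hcross (n - 1) (by omega))]
    omega
  · simp [occE_canonTopRow (hcross c (by omega)), occW_canonTopRow (hcross (c + 1) hc)]

end CanonTopRow

theorem Finset.card_filter_lt_card_filter {α : Type*} [Fintype α] {p q : α → Prop}
    [DecidablePred p] [DecidablePred q] (hpq : ∀ a, p a → q a) {a : α} (hq : q a) (hp : ¬p a) :
    (Finset.univ.filter p).card < (Finset.univ.filter q).card :=
  Finset.card_lt_card ⟨fun b hb => by simp_all, fun hsub => hp (by simpa using hsub (by simpa))⟩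

section Exits

variable {m n : ℕ} {β : Fin m → Bool} {π : Fin m ↪ Fin n}

theorem pipeNo_lt_pipeNo_of_top {i r : Fin m} (h : i < r) (hi : β i = true) :
    pipeNo β i < pipeNo β r := by
  rcases hr : β r
  · simp only [pipeNo, hi, hr, dite_true, Bool.false_eq_true, dite_false, Fin.mk_lt_mk]
    exact (Finset.card_filter_lt_card_filter (fun a ha => ha.2) (a := i) hi (by simp)).trans_le
      (Nat.le_add_right _ _)
  · simp only [pipeNo, hi, hr, dite_true, Fin.mk_lt_mk]
    exact Finset.card_filter_lt_card_filter (fun a ha => ⟨ha.1.trans h, ha.2⟩) (a := i) ⟨h, hi⟩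
      (by simp)

theorem pipeNo_lt_pipeNo_of_bot {i r : Fin m} (h : i < r) (hi : β i = false) :
    pipeNo β r < pipeNo β i := by
  rcases hr : β r
  · simp only [pipeNo, hi, hr, Bool.false_eq_true, dite_false, Fin.mk_lt_mk]
    exact Nat.add_lt_add_left (Finset.card_filter_lt_card_filter
      (fun a ha => ⟨h.trans ha.1, ha.2⟩) (a := r) ⟨h, by simp [hr]⟩ (by simp)) _
  · simp only [pipeNo, hi, hr, dite_true, Bool.false_eq_true, dite_false, Fin.mk_lt_mk]
    exact (Finset.card_filter_lt_card_filter (fun a ha => ha.2) (a := r) hr (by simp)).trans_le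
      (Nat.le_add_right _ _)

theorem pipeNo_injective (β : Fin m → Bool) : Function.Injective (pipeNo β) := by
  intro i r hir
  by_contra hne
  rcases lt_or_gt_of_ne hne with h | h <;> [cases hi : β i; cases hi : β r]
  · exact (pipeNo_lt_pipeNo_of_bot h hi).ne' hir
  · exact (pipeNo_lt_pipeNo_of_top h hi).ne hir
  · exact (pipeNo_lt_pipeNo_of_bot h hi).ne hir
  · exact (pipeNo_lt_pipeNo_of_top h hi).ne' hir

def exitCol (β : Fin m → Bool) (π : Fin m ↪ Fin n) (i : Fin m) : Fin n := π (pipeNo β i)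

theorem exitCol_injective : Function.Injective (exitCol β π) :=
  fun _ _ h => pipeNo_injective β (π.injective h)

theorem exitCol_inj {i r : Fin m} : (exitCol β π i : ℕ) = exitCol β π r ↔ i = r :=
  Fin.val_inj.trans exitCol_injective.eq_iff

def crosses (β : Fin m → Bool) (π : Fin m ↪ Fin n) (i : Fin m) (j : ℕ) : Bool :=
  decide (∃ r, i < r ∧ (exitCol β π r : ℕ) = j)

variable (hdec : ∀ i i' : Fin m, i < i' → π i' < π i)
include hdec

theorem rowCol_exitCol_lt {k p : Fin m} (h : k < p) :
    rowCol (β k) n (exitCol β π p) < rowCol (β k) n (exitCol β π k) := by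
  rcases hk : β k
  · have := hdec _ _ (pipeNo_lt_pipeNo_of_bot h hk)
    have := (exitCol β π k).isLt
    simp only [rowCol, Bool.false_eq_true, if_false, exitCol, Fin.lt_def] at *
    omega
  · exact hdec _ _ (pipeNo_lt_pipeNo_of_top h hk)

theorem rowCol_exitCol_le {k p : Fin m} (h : k ≤ p) :
    rowCol (β k) n (exitCol β π p) ≤ rowCol (β k) n (exitCol β π k) := by
  rcases h.eq_or_lt with rfl | h
  · rfl
  · exact (rowCol_exitCol_lt hdec h).le

end Exits

section Grid

variable {m n : ℕ} {β : Fin m → Bool} {f : Fin m → Fin n → Tile}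

theorem tilesOf_of_lt (i : Fin m) {j : ℕ} (hj : j < n) : tilesOf f i j = f i ⟨j, hj⟩ :=
  dif_pos hj

theorem isRow_tilesOf_iff {rt : Bool} {i : Fin m} (hn : 0 < n) :
    IsRow rt n (tilesOf f i) ↔
      (∀ j, allowedIn rt (f i j)) ∧
      (∀ (j : Fin n) (h : (j : ℕ) + 1 < n), (f i j).occE = (f i ⟨j + 1, h⟩).occW) ∧
      (∀ j : Fin n, (j : ℕ) = 0 → (f i j).occW = rt) ∧
      (∀ j : Fin n, (j : ℕ) + 1 = n → (f i j).occE = !rt) := by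
  constructor
  · rintro ⟨-, hA, hW, hE, hM⟩
    refine ⟨fun j => ?_, fun j h => ?_, fun j hj => ?_, fun j hj => ?_⟩
    · simpa [tilesOf_of_lt] using hA j j.isLt
    · simpa [tilesOf_of_lt, h] using hM j h
    · obtain ⟨j, hj'⟩ := j
      subst hj
      simpa [tilesOf_of_lt, hn] using hW
    · obtain ⟨j, hj'⟩ := j
      simp only at hj
      subst hj
      simpa [tilesOf_of_lt] using hE
  · rintro ⟨hA, hM, hW, hE⟩
    refine ⟨hn, fun c hc => ?_, ?_, ?_, fun c hc => ?_⟩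
    · simpa [tilesOf_of_lt, hc] using hA ⟨c, hc⟩
    · simpa [tilesOf_of_lt, hn] using hW ⟨0, hn⟩ rfl
    · simpa [tilesOf_of_lt, show n - 1 < n by omega] using hE ⟨n - 1, by omega⟩ (by simp; omega)
    · simpa [tilesOf_of_lt, hc, show c < n by omega] using hM ⟨c, by omega⟩ hc

abbrev orientedRow (β : Fin m → Bool) (f : Fin m → Fin n → Tile) (i : Fin m) : ℕ → Tile :=
  orientRow (β i) n (tilesOf f i)

abbrev orientedBelow (β : Fin m → Bool) (f : Fin m → Fin n → Tile) (i : Fin m) :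
    ℕ → Option (Fin m) :=
  fun c => lineState m n β f (m - (i + 1)) (rowCol (β i) n c)

theorem orientedRow_apply (i : Fin m) {c : ℕ} (hc : c < n) :
    orientedRow β f i c = Tile.orient (β i) (f i ⟨rowCol (β i) n c, rowCol_lt hc⟩) := by
  rw [orientedRow, orientRow, tilesOf_of_lt]

theorem orientedRow_rowCol (i : Fin m) (j : Fin n) :
    orientedRow β f i (rowCol (β i) n j) = Tile.orient (β i) (f i j) := by
  simp [orientedRow_apply _ (rowCol_lt j.isLt), rowCol_rowCol j.isLt]

theorem IsHGPD.isRow_orientedRow (hf : IsHGPD m n β f) (hn : 0 < n) (i : Fin m) :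
    IsRow true n (orientedRow β f i) :=
  isRow_orientRow_iff.mpr <| (isRow_tilesOf_iff hn).mpr
    ⟨hf.1 i, hf.2.1 i, hf.2.2.2.2.1 i, hf.2.2.2.2.2 i⟩

theorem lineState_sub (i : Fin m) (j : ℕ) :
    lineState m n β f (m - i) j =
      topOutT (orientedRow β f i) (orientedBelow β f i) (some i) (rowCol (β i) n j) := by
  obtain ⟨i, hi⟩ := i
  rw [← rowTop_eq_topOutT, show m - i = m - (i + 1) + 1 by omega]
  simp only [lineState, dif_pos (show m - (i + 1) < m by omega),
    show m - 1 - (m - (i + 1)) = i by omega]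

theorem topOutT_orientedRow (i : Fin m) {c : ℕ} (hc : c < n) :
    topOutT (orientedRow β f i) (orientedBelow β f i) (some i) c =
      lineState m n β f (m - i) (rowCol (β i) n c) := by
  rw [lineState_sub, rowCol_rowCol hc]

theorem le_of_lineState_eq_some : ∀ r ≤ m, ∀ j (p : Fin m),
    lineState m n β f r j = some p → m - r ≤ p := by
  intro r
  induction r with
  | zero => simp [lineState]
  | succ r ih =>
    intro hr j p h
    obtain ⟨i, hi⟩ : ∃ i : Fin m, (i : ℕ) = m - 1 - r := ⟨⟨m - 1 - r, by omega⟩, rfl⟩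
    obtain rfl : r = m - (i + 1) := by omega
    rw [show m - (i + 1) + 1 = m - i by omega, lineState_sub] at h
    rcases topOutT_eq_some h with rfl | ⟨c, hc⟩
    · omega
    · have := ih (by omega) _ p hc
      omega

variable (hf : IsHGPD m n β f) (hn : 0 < n)
include hf hn

theorem isSome_lineState_sub_of_succ {i : Fin m}
    (hbelow : ∀ j : Fin n, (lineState m n β f (m - (i + 1)) j).isSome = (f i j).occS)
    (j : Fin n) : (lineState m n β f (m - i) j).isSome = (f i j).occN := by
  rw [lineState_sub, (hf.isRow_orientedRow hn i).isSome_topOutT (fun c hc => ?_)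
    (rowCol_lt j.isLt), orientedRow_rowCol, Tile.occN_orient]
  rw [hbelow ⟨_, rowCol_lt hc⟩, orientedRow_apply _ hc, Tile.occS_orient]

theorem isSome_lineState_sub_succ :
    ∀ (i : Fin m) (j : Fin n), (lineState m n β f (m - (i + 1)) j).isSome = (f i j).occS := by
  intro i
  induction h : m - (i + 1) generalizing i with
  | zero => exact fun j => (hf.2.2.2.1 i j (by omega)).symm
  | succ d ih =>
    intro j
    have hi : (i : ℕ) + 1 < m := by omega
    have := isSome_lineState_sub_of_succ hf hn (i := ⟨i + 1, hi⟩)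
      (fun j' => by convert ih ⟨i + 1, hi⟩ (by simp only; omega) j' using 3; simp only; omega) j
    rw [show m - (i + 1) = d + 1 by omega] at this
    rw [this, hf.2.2.1 i hi j]

theorem isSome_orientedBelow (i : Fin m) :
    ∀ c < n, (orientedBelow β f i c).isSome = (orientedRow β f i c).occS := by
  intro c hc
  rw [isSome_lineState_sub_succ hf hn i ⟨_, rowCol_lt hc⟩, orientedRow_apply _ hc,
    Tile.occS_orient]

theorem sum_isSome_lineState :
    ∀ r ≤ m, ∑ j ∈ Finset.range n, (lineState m n β f r j).isSome.toNat = r := by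
  intro r
  induction r with
  | zero => simp [lineState]
  | succ r ih =>
    intro hr
    obtain ⟨i, hi⟩ : ∃ i : Fin m, (i : ℕ) = m - 1 - r := ⟨⟨m - 1 - r, by omega⟩, rfl⟩
    obtain rfl : r = m - (i + 1) := by omega
    calc ∑ j ∈ Finset.range n, (lineState m n β f (m - (i + 1) + 1) j).isSome.toNat
        = ∑ j ∈ Finset.range n, (topOutT (orientedRow β f i) (orientedBelow β f i) (some i)
            (rowCol (β i) n j)).isSome.toNat := by
          simp only [show m - (i + 1) + 1 = m - i by omega, lineState_sub]
      _ = ∑ c ∈ Finset.range n, (orientedBelow β f i c).isSome.toNat + 1 := by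
          rw [sum_range_rowCol (β i) n (fun c => (topOutT _ _ _ c).isSome.toNat),
            (hf.isRow_orientedRow hn i).sum_isSome_topOutT
              (isSome_orientedBelow hf hn i)]
      _ = m - (i + 1) + 1 := by
          rw [sum_range_rowCol (β i) n (fun j => (lineState m n β f (m - (i + 1)) j).isSome.toNat),
            ih (by omega)]

end Grid

section ExitLines

variable {m n : ℕ} {β : Fin m → Bool} {π : Fin m ↪ Fin n} {f : Fin m → Fin n → Tile}

def IsExitLine (β : Fin m → Bool) (π : Fin m ↪ Fin n) (k : ℕ) (L : ℕ → Option (Fin m)) :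
    Prop :=
  ∀ j < n, ∀ p : Fin m, L j = some p ↔ k ≤ p ∧ (exitCol β π p : ℕ) = j

theorem IsExitLine.isSome_eq_crosses {k : Fin m} {L : ℕ → Option (Fin m)}
    (hL : IsExitLine β π (k + 1) L) {j : ℕ} (hj : j < n) : (L j).isSome = crosses β π k j := by
  rw [crosses, Bool.eq_iff_iff]
  simp only [Option.isSome_iff_exists, hL j hj, decide_eq_true_iff, Fin.lt_def, Nat.succ_le_iff]

theorem isExitLine_iff_of_eq_ite {k : Fin m} {T B : ℕ → Option (Fin m)}
    (hTB : ∀ j < n, T j = if j = exitCol β π k then some k else B j)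
    (hB : B (exitCol β π k) = none) :
    IsExitLine β π k T ↔ IsExitLine β π (k + 1) B := by
  refine forall₂_congr fun j hj => forall_congr' fun p => ?_
  rw [hTB j hj]
  split_ifs with h
  · subst h
    simp only [hB, exitCol_inj, Option.some_inj, reduceCtorEq, false_iff, not_and]
    omega
  · have : (k : ℕ) ≤ p ∧ (exitCol β π p : ℕ) = j ↔ (k : ℕ) + 1 ≤ p ∧ (exitCol β π p : ℕ) = j :=
      ⟨fun ⟨hkp, hp⟩ => ⟨lt_of_le_of_ne hkp fun e => h (Fin.ext e ▸ hp).symm, hp⟩,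
        fun ⟨hkp, hp⟩ => ⟨by omega, hp⟩⟩
    rw [this]

theorem isExitLine_of_connectivity (hf : IsHGPD m n β f) (hn : 0 < n)
    (hc : Connectivity m n β f π) : IsExitLine β π 0 (lineState m n β f m) := by
  have hexit : ∀ p, lineState m n β f m (exitCol β π p) = some p := hc
  intro j hj p
  refine ⟨fun h => ?_, fun ⟨_, hp⟩ => hp ▸ hexit p⟩
  obtain ⟨p', rfl⟩ : ∃ p', (exitCol β π p' : ℕ) = j := by
    -- otherwise the top would carry `m + 1` pipes
    by_contra! hj'
    have hsub : Finset.univ.image (fun p => (exitCol β π p : ℕ)) ⊂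
        (Finset.range n).filter (fun j => (lineState m n β f m j).isSome) := by
      refine (Finset.ssubset_iff_of_subset ?_).mpr ⟨j, by simp [hj, h], by simpa using hj'⟩
      intro c hc
      obtain ⟨p, -, rfl⟩ := Finset.mem_image.mp hc
      simp [hexit]
    have := Finset.card_lt_card hsub
    rw [Finset.card_image_of_injective _ (fun _ _ h => exitCol_injective (Fin.ext h)),
      Finset.card_univ, Fintype.card_fin, Finset.card_filter] at this
    have hcount := sum_isSome_lineState hf hn m le_rfl
    simp only [Bool.toNat, Bool.cond_eq_ite] at hcount
    omega
  rw [hexit, Option.some_inj] at h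
  simp [h]

end ExitLines

section Canonical

variable {m n : ℕ} {β : Fin m → Bool} {π : Fin m ↪ Fin n}

/-- Every pipe runs along its row to its exit column, turns North there and goes straight up. -/
def canonPD (β : Fin m → Bool) (π : Fin m ↪ Fin n) (i : Fin m) (j : Fin n) : Tile :=
  Tile.orient (β i) (canonTopRow (rowCol (β i) n (exitCol β π i))
    (fun c => crosses β π i (rowCol (β i) n c)) (rowCol (β i) n j))

theorem orientedRow_canonPD (i : Fin m) {c : ℕ} (hc : c < n) :
    orientedRow β (canonPD β π) i c =
      canonTopRow (rowCol (β i) n (exitCol β π i))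
        (fun c => crosses β π i (rowCol (β i) n c)) c := by
  rw [orientedRow_apply _ hc, canonPD, Tile.orient_orient, rowCol_rowCol hc]

theorem crosses_succ {i : Fin m} (hi : (i : ℕ) + 1 < m) (j : ℕ) :
    crosses β π i j = (decide (j = exitCol β π ⟨i + 1, hi⟩) || crosses β π ⟨i + 1, hi⟩ j) := by
  rw [crosses, crosses, Bool.eq_iff_iff]
  simp only [Bool.or_eq_true, decide_eq_true_iff, Fin.lt_def]
  constructor
  · rintro ⟨r, hir, hr⟩
    rcases (Nat.succ_le_of_lt hir).eq_or_lt with h | h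
    · left
      rw [← hr, show r = ⟨i + 1, hi⟩ from Fin.ext h.symm]
    · exact .inr ⟨r, h, hr⟩
  · rintro (h | ⟨r, hir, hr⟩)
    · exact ⟨_, Nat.lt_succ_self _, h.symm⟩
    · exact ⟨r, by omega, hr⟩

theorem crosses_last {i : Fin m} (hi : (i : ℕ) + 1 = m) (j : ℕ) : crosses β π i j = false := by
  simp only [crosses, decide_eq_false_iff_not, not_exists, not_and]
  intro r hr
  have := r.isLt
  rw [Fin.lt_def] at hr
  omega

theorem lineState_sub_eq_ite {f : Fin m → Fin n → Tile} {k : Fin m}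
    (hfwd : ∀ c < n, topOutT (orientedRow β f k) (orientedBelow β f k) (some k) c =
      if c = rowCol (β k) n (exitCol β π k) then some k else orientedBelow β f k c) :
    ∀ j < n, lineState m n β f (m - k) j =
      if j = exitCol β π k then some k else lineState m n β f (m - (k + 1)) j := by
  intro j hj
  rw [lineState_sub, hfwd _ (rowCol_lt hj)]
  simp only [orientedBelow, rowCol_inj hj (exitCol β π k).isLt, rowCol_rowCol hj]

variable (hdec : ∀ i i' : Fin m, i < i' → π i' < π i)
include hdec

theorem lt_of_crosses_rowCol {i : Fin m} {c : ℕ} (hc : c < n)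
    (h : crosses β π i (rowCol (β i) n c)) : c < rowCol (β i) n (exitCol β π i) := by
  obtain ⟨r, hir, hr⟩ := by simpa [crosses] using h
  have := rowCol_exitCol_lt (β := β) hdec hir
  rwa [hr, rowCol_rowCol hc] at this

theorem isHGPD_canonPD : IsHGPD m n β (canonPD β π) := by
  have hrow : ∀ i, IsRow true n (orientedRow β (canonPD β π) i) := fun i =>
    (isRow_canonTopRow (rowCol_lt (exitCol β π i).isLt)
      fun c hc => lt_of_crosses_rowCol hdec hc).congr
      fun c hc => (orientedRow_canonPD i hc).symm
  have hrows := fun i =>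
    (isRow_tilesOf_iff (exitCol β π i).pos).mp (isRow_orientRow_iff.mp (hrow i))
  have hS : ∀ i j, (canonPD β π i j).occS = crosses β π i j := fun i j => by
    rw [canonPD, Tile.occS_orient, occS_canonTopRow (lt_of_crosses_rowCol hdec (rowCol_lt j.isLt)),
      rowCol_rowCol j.isLt]
  have hN : ∀ i j, (canonPD β π i j).occN =
      (decide ((j : ℕ) = exitCol β π i) || crosses β π i j) := fun i j => by
    rw [canonPD, Tile.occN_orient, occN_canonTopRow (lt_of_crosses_rowCol hdec (rowCol_lt j.isLt))]
    simp only [rowCol_rowCol j.isLt, rowCol_inj j.isLt (exitCol β π i).isLt]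
  refine ⟨fun i => (hrows i).1, fun i => (hrows i).2.1, fun i hi j => ?_, fun i j hi => ?_,
    fun i => (hrows i).2.2.1, fun i => (hrows i).2.2.2⟩
  · rw [hS, hN, crosses_succ hi]
  · rw [hS, crosses_last hi]

theorem isExitLine_canonPD_sub {k : Fin m}
    (hB : IsExitLine β π (k + 1) (lineState m n β (canonPD β π) (m - (k + 1)))) :
    IsExitLine β π k (lineState m n β (canonPD β π) (m - k)) := by
  have hcross : ∀ c < n, (orientedBelow β (canonPD β π) k c).isSome =
      crosses β π k (rowCol (β k) n c) := fun c hc => hB.isSome_eq_crosses (rowCol_lt hc)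
  refine (isExitLine_iff_of_eq_ite (lineState_sub_eq_ite (topOutT_canonTopRow (fun c hc => ?_)
    fun c hc h => ?_)) ?_).mpr hB
  · rw [orientedRow_canonPD k hc]
    exact canonTopRow_congr (hcross c hc).symm
  · exact lt_of_crosses_rowCol hdec hc (hcross c hc ▸ h)
  · refine Option.eq_none_iff_forall_ne_some.mpr fun p hp => ?_
    obtain ⟨hkp, hp⟩ := (hB _ (exitCol β π k).isLt p).mp hp
    rw [exitCol_inj] at hp
    omega

theorem isExitLine_canonPD : ∀ k ≤ m, IsExitLine β π k (lineState m n β (canonPD β π) (m - k)) :=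
  fun _ hk => Nat.decreasingInduction (fun k hk ih => isExitLine_canonPD_sub hdec (k := ⟨k, hk⟩) ih)
    (fun j _ p => by simp [lineState]) hk

theorem connectivity_canonPD : Connectivity m n β (canonPD β π) π := by
  have hN := isExitLine_canonPD (β := β) hdec 0 (Nat.zero_le m)
  rw [Nat.sub_zero] at hN
  exact fun i => (hN _ (exitCol β π i).isLt i).mpr ⟨Nat.zero_le _, rfl⟩

theorem topOutT_orientedRow_of_isExitLine {f : Fin m → Fin n → Tile} {k : Fin m}
    (hT : IsExitLine β π k (lineState m n β f (m - k))) :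
    topOutT (orientedRow β f k) (orientedBelow β f k) (some k)
        (rowCol (β k) n (exitCol β π k)) = some k ∧
      ∀ c < n, rowCol (β k) n (exitCol β π k) < c →
        topOutT (orientedRow β f k) (orientedBelow β f k) (some k) c = none := by
  refine ⟨?_, fun c hc hqc => ?_⟩
  · rw [topOutT_orientedRow k (rowCol_lt (exitCol β π k).isLt), rowCol_rowCol (exitCol β π k).isLt]
    exact (hT _ (exitCol β π k).isLt k).mpr ⟨le_rfl, rfl⟩
  · rw [topOutT_orientedRow k hc, Option.eq_none_iff_forall_ne_some]
    intro p hp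
    obtain ⟨hkp, hp⟩ := (hT _ (rowCol_lt hc) p).mp hp
    have := rowCol_exitCol_le (β := β) hdec (Fin.le_def.mpr hkp)
    rw [hp, rowCol_rowCol hc] at this
    omega

section Uniqueness

variable {f : Fin m → Fin n → Tile} (hf : IsHGPD m n β f)
include hf

theorem IsHGPD.eq_canonPD_row {k : Fin m} (hT : IsExitLine β π k (lineState m n β f (m - k))) :
    (∀ j, f k j = canonPD β π k j) ∧
      IsExitLine β π (k + 1) (lineState m n β f (m - (k + 1))) := by
  have hn := (exitCol β π k).pos
  have hq := rowCol_lt (rt := β k) (exitCol β π k).isLt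
  obtain ⟨htop_q, htop_gt⟩ := topOutT_orientedRow_of_isExitLine hdec hT
  have hbot_k : ∀ c < n, orientedBelow β f k c ≠ some k := fun c _ h => by
    have := le_of_lineState_eq_some _ (by omega) _ _ h
    omega
  obtain ⟨hshape, hsupp⟩ := (hf.isRow_orientedRow hn k).eq_canonTopRow
    (isSome_orientedBelow hf hn k) htop_gt hq htop_q hbot_k
  have hnone : lineState m n β f (m - (k + 1)) (exitCol β π k) = none := by
    have := hsupp _ hq
    simp only [orientedBelow, rowCol_rowCol (exitCol β π k).isLt] at this
    exact Option.not_isSome_iff_eq_none.mp fun h => (this h).false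
  have hB := (isExitLine_iff_of_eq_ite (lineState_sub_eq_ite (topOutT_canonTopRow hshape hsupp))
    hnone).mp hT
  refine ⟨fun j => ?_, hB⟩
  rw [← Tile.orient_orient (β k) (f k j), ← orientedRow_rowCol, hshape _ (rowCol_lt j.isLt),
    canonPD]
  exact congrArg _ (canonTopRow_congr (hB.isSome_eq_crosses (rowCol_lt (rowCol_lt j.isLt))))

theorem IsHGPD.eq_canonPD (hc : Connectivity m n β f π) : f = canonPD β π := by
  rcases isEmpty_or_nonempty (Fin m) with hm | ⟨⟨i₀⟩⟩
  · exact Subsingleton.elim _ _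
  have hlines : ∀ k ≤ m, IsExitLine β π k (lineState m n β f (m - k)) := by
    intro k
    induction k with
    | zero => exact fun _ => by simpa using isExitLine_of_connectivity hf (π i₀).pos hc
    | succ k ih => exact fun hk => (hf.eq_canonPD_row hdec (k := ⟨k, hk⟩) (ih (by omega))).2
  funext i j
  exact (hf.eq_canonPD_row hdec (hlines i i.isLt.le)).1 j

end Uniqueness

end Canonical

theorem Finset.prod_ite_eq_ite_lt {α M : Type*} [Fintype α] [LinearOrder α] [CommMonoid M]
    (a : α) (x : M) (f g : α → M) :
    ∏ b, (if b = a then x else if b < a then f b else g b) =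
      x * (∏ b ∈ Finset.univ.filter (· < a), f b) * ∏ b ∈ Finset.univ.filter (a < ·), g b := by
  calc ∏ b, (if b = a then x else if b < a then f b else g b)
      = ∏ b, ((if b = a then x else 1) * (if b < a then f b else 1) * (if a < b then g b else 1)) :=
        Finset.prod_congr rfl fun b _ => by
          rcases lt_trichotomy b a with h | rfl | h
          · simp [h, h.ne, h.not_gt]
          · simp
          · simp [h, h.ne', h.not_gt]
    _ = _ := by
      rw [Finset.prod_mul_distrib, Finset.prod_mul_distrib, Finset.prod_ite_eq',
        Finset.prod_filter, Finset.prod_filter]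
      simp

theorem tileWt_orient {m n : ℕ} (rt : Bool) (t : Tile) (k : Fin m) (j : Fin n) :
    tileWt m n rt (Tile.orient rt t) k j = tileWt m n rt t k j := by
  cases rt <;> cases t <;> rfl

section Weight

variable {m n : ℕ} {β : Fin m → Bool} {π : Fin m ↪ Fin n}
  (hdec : ∀ i i' : Fin m, i < i' → π i' < π i)
include hdec

theorem tileWt_canonPD (i : Fin m) (j : Fin n) :
    tileWt m n (β i) (canonPD β π i j) (pipeNo β i) j =
      if j = exitCol β π i then AP m n + BP m n
      else if j < exitCol β π i then AP m n + xP m n (pipeNo β i) - yP m n j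
      else BP m n - xP m n (pipeNo β i) + yP m n j := by
  have hcross := lt_of_crosses_rowCol (β := β) (i := i) hdec (rowCol_lt (rt := β i) j.isLt)
  have he := (exitCol β π i).isLt
  have hj := j.isLt
  rw [canonPD, tileWt_orient, canonTopRow]
  rw [rowCol_rowCol j.isLt] at hcross ⊢
  rcases hβ : β i <;> simp only [hβ, rowCol, Bool.false_eq_true, if_false, if_true] at hcross ⊢ <;>
    by_cases h1 : j = exitCol β π i <;> by_cases h2 : j < exitCol β π i <;>
    simp only [Fin.ext_iff, Fin.lt_def] at h1 h2 <;>
    split_ifs <;> first | omega | exact absurd (hcross ‹_›) (by omega) |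
      simp [tileWt, Tile.isElbow, Tile.isStraight]

theorem pdWeight_canonPD :
    pdWeight m n β (canonPD β π) =
      ∏ i : Fin m,
        ((AP m n + BP m n) *
          (∏ j ∈ Finset.univ.filter (fun j : Fin n => j < π i),
            (AP m n + xP m n i - yP m n j)) *
          ∏ j ∈ Finset.univ.filter (fun j : Fin n => π i < j),
            (BP m n - xP m n i + yP m n j)) := by
  refine Fintype.prod_bijective (pipeNo β) (Finite.injective_iff_bijective.mp (pipeNo_injective β))
    _ _ fun i => ?_
  simp only [tileWt_canonPD hdec]
  exact Finset.prod_ite_eq_ite_lt _ _ _ _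

end Weight

theorem GPD_decreasing_general (m n : ℕ) (β : Fin m → Bool) (π : Fin m ↪ Fin n)
    (hdec : ∀ i i' : Fin m, i < i' → π i' < π i) :
    GPD m n β π =
      ∏ i : Fin m,
        ((AP m n + BP m n) *
          (∏ j ∈ Finset.univ.filter (fun j : Fin n => j < π i),
            (AP m n + xP m n i - yP m n j)) *
          ∏ j ∈ Finset.univ.filter (fun j : Fin n => π i < j),
            (BP m n - xP m n i + yP m n j)) := by
  classical
  have hsupp : Finset.univ.filter (fun f => IsHGPD m n β f ∧ Connectivity m n β f π) =
      {canonPD β π} := by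
    ext f
    simp only [Finset.mem_filter, Finset.mem_univ, true_and, Finset.mem_singleton]
    exact ⟨fun ⟨hf, hc⟩ => hf.eq_canonPD hdec hc,
      fun h => h ▸ ⟨isHGPD_canonPD hdec, connectivity_canonPD hdec⟩⟩
  rw [GPD, hsupp, Finset.sum_singleton, pdWeight_canonPD hdec]

/-- For decreasing `π`, the generic pipe dream polynomial is the explicit product
`∏_i (A+B) ∏_{j<π(i)} (A+x_i−y_j) ∏_{j>π(i)} (B−x_i+y_j)`. -/
theorem GPD_decreasing (m n : ℕ) (hm : 1 ≤ m) (hmn : m ≤ n)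
    (β : Fin m → Bool) (π : Fin m ↪ Fin n)
    (hdec : ∀ i i' : Fin m, i < i' → π i' < π i) :
    GPD m n β π =
      ∏ i : Fin m,
        ((AP m n + BP m n) *
          (∏ j ∈ Finset.univ.filter (fun j : Fin n => j < π i),
            (AP m n + xP m n i - yP m n j)) *
          ∏ j ∈ Finset.univ.filter (fun j : Fin n => π i < j),
            (BP m n - xP m n i + yP m n j)) :=
  GPD_decreasing_general m n β π hdec
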